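/- Let p ≥ 1, let T_p be an invertible p×p matrix over F₂, let n ≥ 0, and set G = T₂^{⊗n} ⊗ T_p with N = 2^n·p. For every K with 1 ≤ K ≤ N, let V(K) denote the K-th largest element (with multiplicity) of the multiset { S_{T₂^{⊗n}}(i) · S_{T_p}(j) : 1 ≤ i ≤ 2^n, 1 ≤ j ≤ p }. Then for every subset I ⊆ {0,…,N−1} of size K one has d_G(I) ≤ V(K), i.e., no choice of K rows of G spans a code of minimum distance exceeding V(K). -/

import Mathlib

/-!
Since `T₂ ⊗ B = [[B, 0], [B, B]]`, the message `(u₀, u₁)` is encoded as `((u₀ + u₁) B, u₁ B)`.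
Hence if every codeword spanned by a set `I` of rows of `T₂ ⊗ B` has weight at least `t`, the rows
of `I` in the upper block span codewords of `B` of weight at least `t` (take `u₁ = 0`), and those in
the lower block codewords of weight at least `⌈t / 2⌉` (take `u₀ = 0`). Counting, for every
threshold `t`, the rows that can be selected, induction on `n` shows that `|I|` is at most the
number of pairs `(b, j)` with `t ≤ 2 ^ wt(b) · S_{T_p}(j + 1)`, where `wt(b)` is the binary weight
of `b`. The same encoding shows that rows of `T₂^{⊗n}` of binary weight at least `k` only span
codewords of weight at least `2 ^ k`, so `S_{T₂^{⊗n}}` dominates the sorted row weights `2 ^ wt(b)`.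
Taking `t = d_G(I)`, at least `|I| = K` entries of the multiset are `≥ d_G(I)`, which is the claim.
-/

open Matrix

noncomputable section

abbrev F2 : Type := ZMod 2

/-- The Arikan kernel `T₂ = ((1,0),(1,1))` over `F₂`. -/
def T2 : Matrix (Fin 2) (Fin 2) F2 := !![1, 0; 1, 1]

/-- Kronecker product of `Fin`-indexed square matrices, with the standard index
convention `(A ⊗ B) i j = A (i / n) (j / n) * B (i % n) (j % n)`. -/
def kron {m n : ℕ} (A : Matrix (Fin m) (Fin m) F2) (B : Matrix (Fin n) (Fin n) F2) :
    Matrix (Fin (m * n)) (Fin (m * n)) F2 :=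
  fun i j => A i.divNat j.divNat * B i.modNat j.modNat

/-- The `n`-fold Kronecker power of `T₂` (with `T₂^{⊗0}` the 1×1 identity). -/
def T2pow : (n : ℕ) → Matrix (Fin (2 ^ n)) (Fin (2 ^ n)) F2
  | 0 => 1
  | n + 1 => (kron T2 (T2pow n)).submatrix
      (Fin.cast (by rw [pow_succ, Nat.mul_comm]))
      (Fin.cast (by rw [pow_succ, Nat.mul_comm]))

/-- Minimum distance `d_G(I)`: the minimum Hamming weight of `u · G` over all
nonzero row vectors `u` with support contained in `I`. -/
def minDist {N : ℕ} (G : Matrix (Fin N) (Fin N) F2) (I : Finset (Fin N)) : ℕ :=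
  sInf {w | ∃ u : Fin N → F2, u ≠ 0 ∧ (∀ i, u i ≠ 0 → i ∈ I) ∧
    hammingNorm (Matrix.vecMul u G) = w}

/-- Minimum-distance spectrum `S_G(K)`: the maximum of `d_G(I)` over all
row-index sets `I` of size `K`. -/
def spec {N : ℕ} (G : Matrix (Fin N) (Fin N) F2) (K : ℕ) : ℕ :=
  sSup {d | ∃ I : Finset (Fin N), I.card = K ∧ minDist G I = d}

/-- `K`-th largest element (1-indexed, counted with multiplicity) of a
multiset of natural numbers. -/
def kthLargest (s : Multiset ℕ) (K : ℕ) : ℕ :=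
  ((s.sort (· ≤ ·)).reverse).getD (K - 1) 0

open Finset
open scoped Kronecker

theorem le_kthLargest_of_le_countP {s : Multiset ℕ} {K t : ℕ} (hK : 0 < K)
    (h : K ≤ s.countP (t ≤ ·)) : t ≤ kthLargest s K := by
  set L := (s.sort (· ≤ ·)).reverse
  have hkth : kthLargest s K = (L.drop (K - 1)).head?.getD 0 := by
    rw [List.head?_drop, ← List.getD_eq_getElem?_getD]; rfl
  have hsorted : L.Pairwise (· ≥ ·) := List.pairwise_reverse.2 (s.pairwise_sort _)
  have hcount : s.countP (t ≤ ·) = L.countP (t ≤ ·) := by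
    rw [← Multiset.sort_eq s (· ≤ ·), Multiset.coe_countP]
    exact ((List.reverse_perm _).countP_eq _).symm
  by_contra! hlt
  have hdrop : (L.drop (K - 1)).countP (t ≤ ·) = 0 := by
    rw [List.countP_eq_zero]
    cases hL : L.drop (K - 1) with
    | nil => simp
    | cons a l =>
      have ha : a < t := by simpa [hkth, hL] using hlt
      have hal : (a :: l).Pairwise (· ≥ ·) := hL ▸ hsorted.drop
      intro x hx
      rcases List.mem_cons.1 hx with rfl | hx
      · simpa using ha
      · simpa using (List.rel_of_pairwise_cons hal hx).trans_lt ha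
  have htake : (L.take (K - 1)).countP (t ≤ ·) ≤ K - 1 :=
    List.countP_le_length.trans (List.length_take_le _ _)
  have hsplit := List.countP_append (p := (t ≤ ·)) (l₁ := L.take (K - 1)) (l₂ := L.drop (K - 1))
  rw [L.take_append_drop] at hsplit
  omega

theorem card_filter_prod {α β : Type*} [Fintype α] [Fintype β] (P : α × β → Prop)
    [DecidablePred P] : #{x | P x} = ∑ a, #{b | P (a, b)} := by
  simp only [card_filter, Fintype.sum_prod_type]

section Hamming

variable {ι κ β : Type*} [Fintype ι] [Fintype κ] [Zero β] [DecidableEq β]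

theorem hammingNorm_comp_equiv (x : ι → β) (e : κ ≃ ι) : hammingNorm (x ∘ e) = hammingNorm x :=
  card_equiv e (by simp)

theorem hammingNorm_prod (x : ι × κ → β) : hammingNorm x = ∑ i, hammingNorm fun k => x (i, k) :=
  card_filter_prod _

end Hamming

section SpectrumBound

variable {ι κ : Type*} [Fintype ι] [Fintype κ]

def IsDistLowerBound (G : Matrix ι ι F2) (I : Finset ι) (t : ℕ) : Prop :=
  ∀ u : ι → F2, u ≠ 0 → (∀ i, u i ≠ 0 → i ∈ I) → t ≤ hammingNorm (u ᵥ* G)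

theorem IsDistLowerBound.mono {G : Matrix ι ι F2} {I J : Finset ι} {t : ℕ}
    (h : IsDistLowerBound G J t) (hIJ : I ⊆ J) : IsDistLowerBound G I t :=
  fun u hu hI => h u hu fun i hi => hIJ (hI i hi)

theorem isDistLowerBound_minDist {N : ℕ} (G : Matrix (Fin N) (Fin N) F2) (I : Finset (Fin N)) :
    IsDistLowerBound G I (minDist G I) :=
  fun u hu hI => Nat.sInf_le ⟨u, hu, hI, rfl⟩

theorem IsDistLowerBound.le_minDist {N : ℕ} {G : Matrix (Fin N) (Fin N) F2}
    {I : Finset (Fin N)} {t : ℕ} (h : IsDistLowerBound G I t) (hI : I.Nonempty) :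
    t ≤ minDist G I := by
  obtain ⟨i, hi⟩ := hI
  refine le_csInf ⟨_, Pi.single i 1, by simp, fun j hj => ?_, rfl⟩ ?_
  · rwa [show j = i by simpa [Pi.single_apply] using hj]
  · rintro _ ⟨u, hu, hsupp, rfl⟩
    exact h u hu hsupp

theorem minDist_le_spec {N : ℕ} (G : Matrix (Fin N) (Fin N) F2) (I : Finset (Fin N)) :
    minDist G I ≤ spec G #I := by
  refine le_csSup ⟨N, ?_⟩ ⟨I, rfl, rfl⟩
  rintro _ ⟨J, -, rfl⟩
  rcases Set.eq_empty_or_nonempty {w | ∃ u : Fin N → F2, u ≠ 0 ∧ (∀ i, u i ≠ 0 → i ∈ J) ∧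
      hammingNorm (u ᵥ* G) = w} with hempty | ⟨_, hw⟩
  · simp [minDist, hempty]
  · refine (Nat.sInf_le hw).trans ?_
    obtain ⟨u, -, -, rfl⟩ := hw
    exact hammingNorm_le_card_fintype.trans_eq (Fintype.card_fin N)

/-- The counting form of `S_G(K) ≤` (the `K`-th largest value of `c`) for all `K`. -/
def IsSpectrumBound (G : Matrix ι ι F2) (c : κ → ℕ) : Prop :=
  ∀ I t, IsDistLowerBound G I t → #I ≤ #{k | t ≤ c k}

theorem isSpectrumBound_spec {N : ℕ} (G : Matrix (Fin N) (Fin N) F2) :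
    IsSpectrumBound G fun k : Fin N => spec G (k + 1) := by
  intro I t h
  have hsub : ({k | k < #I} : Finset (Fin N)) ⊆ ({k | t ≤ spec G (k + 1)} : Finset (Fin N)) := by
    intro k hk
    obtain ⟨J, hJI, hJ⟩ := I.exists_subset_card_eq (show (k : ℕ) + 1 ≤ #I by simpa using hk)
    have hJne : J.Nonempty := card_pos.1 (by omega)
    simpa [hJ] using ((h.mono hJI).le_minDist hJne).trans (minDist_le_spec G J)
  have hI : #I ≤ N := (card_le_univ I).trans_eq (Fintype.card_fin N)
  simpa [Fin.card_filter_val_lt, hI] using card_le_card hsub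

theorem IsSpectrumBound.comp_equiv {κ' : Type*} [Fintype κ'] {G : Matrix ι ι F2} {c : κ → ℕ}
    (h : IsSpectrumBound G c) (σ : κ' ≃ κ) : IsSpectrumBound G (c ∘ σ) := by
  intro I t hI
  rw [card_equiv σ (t := {k | t ≤ c k}) (by simp)]
  exact h I t hI

theorem IsSpectrumBound.submatrix_equiv {ι' : Type*} [Fintype ι'] {B : Matrix ι ι F2}
    {c : κ → ℕ} (h : IsSpectrumBound B c) (e : ι' ≃ ι) :
    IsSpectrumBound (B.submatrix e e) c := by
  classical
  intro I t hI
  rw [← card_map e.toEmbedding]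
  refine h _ t fun u hu hsupp => ?_
  have hue : u ∘ e ≠ 0 := fun h0 => hu (by ext i; simpa using congrFun h0 (e.symm i))
  have := hI (u ∘ e) hue fun i hi => by simpa using hsupp _ hi
  rwa [submatrix_vecMul_equiv, hammingNorm_comp_equiv, Function.comp_assoc,
    e.self_comp_symm, Function.comp_id] at this

end SpectrumBound

section T2Kronecker

variable {κ κ' : Type*} [Fintype κ] [Fintype κ'] {B : Matrix κ κ F2}

theorem hammingNorm_vecMul_T2_kronecker (v : Fin 2 → κ → F2) :
    hammingNorm (Function.uncurry v ᵥ* (T2 ⊗ₖ B)) =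
      hammingNorm ((v 0 + v 1) ᵥ* B) + hammingNorm (v 1 ᵥ* B) := by
  rw [hammingNorm_prod, Fin.sum_univ_two]
  congr 2 <;> ext l <;>
    simp [vecMul, dotProduct, Fintype.sum_prod_type, Fin.sum_univ_two, T2, add_mul,
      sum_add_distrib]

theorem two_pow_le_hammingNorm_vecMul_T2_kronecker {w : κ → ℕ}
    (hB : ∀ v : κ → F2, v ≠ 0 → ∀ k, (∀ i, v i ≠ 0 → k ≤ w i) → 2 ^ k ≤ hammingNorm (v ᵥ* B))
    {u : Fin 2 × κ → F2} (hu : u ≠ 0) {k : ℕ} (hk : ∀ x, u x ≠ 0 → k ≤ x.1 + w x.2) :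
    2 ^ k ≤ hammingNorm (u ᵥ* (T2 ⊗ₖ B)) := by
  rw [← Function.uncurry_curry u, hammingNorm_vecMul_T2_kronecker]
  set v : Fin 2 → κ → F2 := Function.curry u
  have hv0 (i) (hi : v 0 i ≠ 0) : k ≤ w i := by simpa using hk (0, i) hi
  have hv1 (i) (hi : v 1 i ≠ 0) : k - 1 ≤ w i := by
    have : k ≤ 1 + w i := by simpa using hk (1, i) hi
    omega
  -- if `v 1` or `v 0 + v 1` vanishes, the other block alone has weight `≥ 2 ^ k`;
  -- otherwise each block contributes `2 ^ (k - 1)`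
  by_cases h1 : v 1 = 0
  · have h0 : v 0 ≠ 0 := fun h0 => hu <| funext fun ⟨a, i⟩ => by
      have hvzero : ∀ a, v a = 0 := Fin.forall_fin_two.2 ⟨h0, h1⟩
      simpa [v] using congrFun (hvzero a) i
    rw [h1, add_zero, zero_vecMul, hammingNorm_zero, add_zero]
    exact hB _ h0 k hv0
  by_cases h01 : v 0 + v 1 = 0
  · have h10 : v 1 = v 0 := funext fun i => (CharTwo.add_eq_zero.1 (congrFun h01 i)).symm
    exact (hB _ h1 k fun i hi => hv0 i (h10 ▸ hi)).trans (Nat.le_add_left _ _)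
  have hsum := hB _ h01 (k - 1) fun i hi => by
    rcases ne_or_eq (v 0 i) 0 with h | h
    · exact (hv0 i h).trans' (Nat.sub_le k 1)
    · exact hv1 i (by simpa [h] using hi)
  calc 2 ^ k ≤ 2 ^ (k - 1) + 2 ^ (k - 1) := by
        rcases k with _ | k
        · simp
        · simp [pow_succ, mul_two]
    _ ≤ _ := add_le_add hsum (hB _ h1 (k - 1) hv1)

theorem hammingNorm_vecMul_T2_kronecker_single (a : Fin 2) (v : κ → F2) :
    hammingNorm (Function.uncurry (Pi.single a v) ᵥ* (T2 ⊗ₖ B)) =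
      2 ^ (a : ℕ) * hammingNorm (v ᵥ* B) := by
  rw [hammingNorm_vecMul_T2_kronecker]
  fin_cases a <;> simp [two_mul]

theorem IsSpectrumBound.T2_kronecker {c : κ' → ℕ} (h : IsSpectrumBound B c) :
    IsSpectrumBound (T2 ⊗ₖ B) fun x : Fin 2 × κ' => 2 ^ (x.1 : ℕ) * c x.2 := by
  classical
  intro I t hI
  have hblock (a : Fin 2) : IsDistLowerBound B {k | (a, k) ∈ I} (t ⌈/⌉ 2 ^ (a : ℕ)) := by
    intro v hv hsupp
    have hw : Function.uncurry (Pi.single a v) ≠ 0 := fun h0 =>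
      hv (funext fun k => by simpa using congrFun h0 (a, k))
    refine (ceilDiv_le_iff_le_mul (by positivity)).2 ?_
    rw [← hammingNorm_vecMul_T2_kronecker_single]
    refine hI _ hw fun ⟨b, k⟩ hbk => ?_
    obtain rfl | hb := eq_or_ne b a
    · simpa using hsupp k (by simpa using hbk)
    · simp [hb] at hbk
  calc #I = ∑ a, #{k | (a, k) ∈ I} := by
        rw [← card_filter_prod (· ∈ I), filter_mem_eq_inter, univ_inter]
    _ ≤ ∑ a : Fin 2, #{k | t ⌈/⌉ 2 ^ (a : ℕ) ≤ c k} := sum_le_sum fun a _ => h _ _ (hblock a)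
    _ = #{x : Fin 2 × κ' | t ≤ 2 ^ (x.1 : ℕ) * c x.2} := by
      rw [card_filter_prod]
      refine Fintype.sum_congr _ _ fun a => ?_
      simp only [ceilDiv_le_iff_le_mul (show 0 < 2 ^ (a : ℕ) by positivity)]

end T2Kronecker

def finTwoMulEquiv {N m : ℕ} (h : N = 2 * m) : Fin N ≃ Fin 2 × Fin m :=
  (finCongr h).trans finProdFinEquiv.symm

theorem T2pow_succ (n : ℕ) :
    T2pow (n + 1) = (T2 ⊗ₖ T2pow n).submatrix (finTwoMulEquiv (pow_succ' 2 n))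
      (finTwoMulEquiv (pow_succ' 2 n)) :=
  rfl

theorem kron_T2pow_zero {p : ℕ} (Tp : Matrix (Fin p) (Fin p) F2) :
    kron (T2pow 0) Tp = Tp.submatrix (finCongr (by simp)) (finCongr (by simp)) := by
  ext i j
  have hlt (x : Fin (2 ^ 0 * p)) : (x : ℕ) < p := x.2.trans_eq (one_mul p)
  have hdiv : i.divNat = j.divNat := Fin.ext (by simp)
  simp only [kron, T2pow, submatrix_apply]
  rw [hdiv, one_apply_eq, one_mul]
  congr 1 <;> ext <;> simp [Nat.mod_eq_of_lt (hlt _)]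

theorem kron_T2pow_succ {p : ℕ} (Tp : Matrix (Fin p) (Fin p) F2) (n : ℕ) :
    kron (T2pow (n + 1)) Tp = (T2 ⊗ₖ kron (T2pow n) Tp).submatrix
      (finTwoMulEquiv (by ring)) (finTwoMulEquiv (by ring)) := by
  ext i j
  simp only [kron, T2pow_succ, finTwoMulEquiv, submatrix_apply, kroneckerMap_apply,
    Equiv.trans_apply, finCongr_apply, finProdFinEquiv_symm_apply, mul_assoc]
  have key (x : ℕ) : x / p / 2 ^ n = x / (2 ^ n * p) ∧ x / p % 2 ^ n = x % (2 ^ n * p) / p ∧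
      x % p = x % (2 ^ n * p) % p := by
    simp only [Nat.mul_comm (2 ^ n) p, Nat.div_div_eq_div_mul, Nat.mod_mul_right_div_self,
      Nat.mod_mod_of_dvd _ (dvd_mul_right p _), and_self]
  congr 2 <;> first | (ext; simp [key]) | (congr 1 <;> ext <;> simp [key])

/-- The number of ones in the binary expansion of `b`. -/
def binaryWeight : (n : ℕ) → Fin (2 ^ n) → ℕ
  | 0, _ => 0
  | n + 1, b =>
    (finTwoMulEquiv (pow_succ' 2 n) b).1 + binaryWeight n (finTwoMulEquiv (pow_succ' 2 n) b).2

theorem two_pow_le_hammingNorm_vecMul_T2pow (n : ℕ) {u : Fin (2 ^ n) → F2} (hu : u ≠ 0) {k : ℕ}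
    (hk : ∀ b, u b ≠ 0 → k ≤ binaryWeight n b) : 2 ^ k ≤ hammingNorm (u ᵥ* T2pow n) := by
  induction n generalizing k with
  | zero =>
    obtain ⟨b, hb⟩ := Function.ne_iff.1 hu
    have hk0 : k = 0 := Nat.le_zero.1 (hk b hb)
    simpa [hk0, T2pow, Nat.one_le_iff_ne_zero] using hu
  | succ n ih =>
    rw [T2pow_succ, submatrix_vecMul_equiv, hammingNorm_comp_equiv]
    refine two_pow_le_hammingNorm_vecMul_T2_kronecker (fun v hv k hk => ih hv hk)
      (fun h0 => hu (funext fun b => by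
        simpa using congrFun h0 (finTwoMulEquiv (pow_succ' 2 n) b))) fun x hx => ?_
    simpa [binaryWeight] using hk _ hx

theorem card_filter_two_pow_binaryWeight_le (n t c : ℕ) :
    #{b : Fin (2 ^ n) | t ≤ 2 ^ binaryWeight n b * c} ≤
      #{i : Fin (2 ^ n) | t ≤ spec (T2pow n) (i + 1) * c} := by
  set I : Finset (Fin (2 ^ n)) := {b | t ≤ 2 ^ binaryWeight n b * c}
  rcases I.eq_empty_or_nonempty with hI | hI
  · simp [hI]
  obtain ⟨b₀, hb₀, hmin⟩ := I.exists_min_image (binaryWeight n) hI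
  have hbound : IsDistLowerBound (T2pow n) I (2 ^ binaryWeight n b₀) := fun u hu hsupp =>
    two_pow_le_hammingNorm_vecMul_T2pow n hu fun b hb => hmin b (hsupp b hb)
  refine (isSpectrumBound_spec _ I _ hbound).trans (card_le_card fun i hi => ?_)
  simp only [I, mem_filter, mem_univ, true_and] at hi hb₀ ⊢
  exact hb₀.trans (Nat.mul_le_mul_right c hi)

theorem card_filter_two_pow_binaryWeight_mul_le {κ : Type*} [Fintype κ] (n t : ℕ) (c : κ → ℕ) :
    #{x : Fin (2 ^ n) × κ | t ≤ 2 ^ binaryWeight n x.1 * c x.2} ≤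
      #{x : Fin (2 ^ n) × κ | t ≤ spec (T2pow n) (x.1 + 1) * c x.2} := by
  simp only [card_filter, Fintype.sum_prod_type_right]
  refine sum_le_sum fun k _ => ?_
  simpa only [card_filter] using card_filter_two_pow_binaryWeight_le n t (c k)

theorem IsSpectrumBound.kron_T2pow {p : ℕ} {Tp : Matrix (Fin p) (Fin p) F2} {c : Fin p → ℕ}
    (h : IsSpectrumBound Tp c) (n : ℕ) :
    IsSpectrumBound (kron (T2pow n) Tp) fun x : Fin (2 ^ n) × Fin p =>
      2 ^ binaryWeight n x.1 * c x.2 := by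
  induction n with
  | zero =>
    rw [kron_T2pow_zero]
    have := (h.submatrix_equiv (finCongr (by simp : 2 ^ 0 * p = p))).comp_equiv
      (((finCongr (pow_zero 2)).prodCongr (Equiv.refl _)).trans (Equiv.uniqueProd _ _))
    simpa [binaryWeight, Function.comp_def] using this
  | succ n ih =>
    rw [kron_T2pow_succ]
    have := (ih.T2_kronecker.submatrix_equiv
      (finTwoMulEquiv (by ring : 2 ^ (n + 1) * p = 2 * (2 ^ n * p)))).comp_equiv
      (((finTwoMulEquiv (pow_succ' 2 n)).prodCongr (Equiv.refl _)).trans (Equiv.prodAssoc _ _ _))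
    convert this using 2 with x
    simp [binaryWeight, pow_add, mul_assoc]

theorem minDist_le_kron_spectrum_general
    (p : ℕ) (Tp : Matrix (Fin p) (Fin p) F2)
    (n : ℕ) (K : ℕ) (hK1 : 1 ≤ K) :
    ∀ I : Finset (Fin (2 ^ n * p)), I.card = K →
      minDist (kron (T2pow n) Tp) I ≤
        kthLargest
          (((Finset.univ : Finset (Fin (2 ^ n) × Fin p)).val).map
            (fun ij => spec (T2pow n) (ij.1.val + 1) * spec Tp (ij.2.val + 1))) K := by
  rintro I rfl
  set d := minDist (kron (T2pow n) Tp) I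
  refine le_kthLargest_of_le_countP hK1 ?_
  rw [Multiset.countP_map]
  calc #I ≤ #{x : Fin (2 ^ n) × Fin p | d ≤ 2 ^ binaryWeight n x.1 * spec Tp (x.2 + 1)} :=
        (isSpectrumBound_spec Tp).kron_T2pow n I d (isDistLowerBound_minDist _ I)
    _ ≤ _ := card_filter_two_pow_binaryWeight_mul_le n d fun j : Fin p => spec Tp (j + 1)

theorem minDist_le_kron_spectrum
    (p : ℕ) (hp : 1 ≤ p) (Tp : Matrix (Fin p) (Fin p) F2) (hTp : IsUnit Tp)
    (n : ℕ) (K : ℕ) (hK1 : 1 ≤ K) (hK2 : K ≤ 2 ^ n * p) :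
    ∀ I : Finset (Fin (2 ^ n * p)), I.card = K →
      minDist (kron (T2pow n) Tp) I ≤
        kthLargest
          (((Finset.univ : Finset (Fin (2 ^ n) × Fin p)).val).map
            (fun ij => spec (T2pow n) (ij.1.val + 1) * spec Tp (ij.2.val + 1))) K :=
  minDist_le_kron_spectrum_general p Tp n K hK1

end
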